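/- Let L be a frame and C a lattice congruence on L. Define C̃ ⊆ L × L to be the set of pairs (a,b) for which there exist an ordinal γ and a monotone function x from the ordinals ≤ γ to L such that x(0) ≤ a ⊓ b, a ⊔ b ≤ x(γ), (x(α), x(α+1)) ∈ C for every α < γ, and x(β) = ⨆_{α < β} x(α) for every limit ordinal β ≤ γ. Then C̃ is a frame congruence on L and C ⊆ C̃. -/

import Mathlib

universe u

/-- A lattice congruence on a frame `L`: an equivalence relation closed under
binary meets and binary joins (pointwise). -/
def IsLatticeCongruence {L : Type u} [Order.Frame L] (C : Set (L × L)) : Prop :=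
  Equivalence (fun a b : L => (a, b) ∈ C) ∧
    ∀ p q : L × L, p ∈ C → q ∈ C →
      (p.1 ⊓ q.1, p.2 ⊓ q.2) ∈ C ∧ (p.1 ⊔ q.1, p.2 ⊔ q.2) ∈ C

/-- A frame congruence on a frame `L`: an equivalence relation closed under
binary meets and arbitrary joins (pointwise). -/
def IsFrameCongruence {L : Type u} [Order.Frame L] (C : Set (L × L)) : Prop :=
  Equivalence (fun a b : L => (a, b) ∈ C) ∧
    (∀ p q : L × L, p ∈ C → q ∈ C → (p.1 ⊓ q.1, p.2 ⊓ q.2) ∈ C) ∧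
    ∀ S : Set (L × L), S ⊆ C → (sSup (Prod.fst '' S), sSup (Prod.snd '' S)) ∈ C

/-- The relation `C̃`: pairs connected by a transfinite increasing `C`-chain. -/
def chainRel {L : Type u} [Order.Frame L] (C : Set (L × L)) : Set (L × L) :=
  {p | ∃ (γ : Ordinal.{u}) (x : Ordinal.{u} → L),
        MonotoneOn x (Set.Iic γ) ∧
        x 0 ≤ p.1 ⊓ p.2 ∧
        p.1 ⊔ p.2 ≤ x γ ∧
        (∀ α < γ, (x α, x (α + 1)) ∈ C) ∧
        (∀ β ≤ γ, Order.IsSuccLimit β → x β = ⨆ α : Set.Iio β, x α)}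

/-!
Freezing a chain after its last index `γ` makes it a chain on all ordinals, so `(a, b) ∈ C̃`
says that some such chain starts below `a ⊓ b` and ends above `a ⊔ b` (`Reaches C (a ⊓ b) (a ⊔ b)`).
Since `C` is a lattice congruence and `L` is a frame, `x ↦ x ⊓ c` and `x ↦ x ⊔ c` map chains
to chains; this gives compatibility with meets. Everything else comes from one construction:
chains `Y q` (`q` an ordinal) of a common limit length `Γ` concatenate to the single chain
`Γ * q + r ↦ Y q r ⊔ c ⊔ ⨆ q' < q, Y q' Γ`, where joining the tops of the earlier blocks keeps
it monotone and continuous at the block boundaries. Two blocks make `Reaches C` transitive, and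
one block per member of a family, enumerated along a well-order, turns `Reaches C u (v i)` for
all `i` into `Reaches C u (⨆ i, v i)`, which yields closure of `C̃` under arbitrary joins.
-/

open Ordinal Order Set

section Chains

variable {L : Type u} [Order.Frame L] {C : Set (L × L)}

theorem IsLatticeCongruence.sup_right (hC : IsLatticeCongruence C) {a b : L} (h : (a, b) ∈ C)
    (c : L) : (a ⊔ c, b ⊔ c) ∈ C :=
  (hC.2 (a, b) (c, c) h (hC.1.refl c)).2

theorem IsLatticeCongruence.inf_right (hC : IsLatticeCongruence C) {a b : L} (h : (a, b) ∈ C)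
    (c : L) : (a ⊓ c, b ⊓ c) ∈ C :=
  (hC.2 (a, b) (c, c) h (hC.1.refl c)).1

theorem IsLatticeCongruence.inf_sup_mem (hC : IsLatticeCongruence C) {a b : L} (h : (a, b) ∈ C) :
    (a ⊓ b, a ⊔ b) ∈ C := by
  have hinf : (a ⊓ b, b) ∈ C := by simpa using hC.inf_right h b
  have hsup : (a ⊔ b, b) ∈ C := by simpa using hC.sup_right h b
  exact hC.1.trans hinf (hC.1.symm hsup)

def IsTransfiniteChain (C : Set (L × L)) (x : Ordinal.{u} → L) : Prop :=
  Monotone x ∧ (∀ α, (x α, x (α + 1)) ∈ C) ∧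
    ∀ β, IsSuccLimit β → x β = ⨆ α : Iio β, x α

namespace IsTransfiniteChain

theorem const (hC : IsLatticeCongruence C) (a : L) : IsTransfiniteChain C fun _ => a := by
  refine ⟨monotone_const, fun _ => hC.1.refl a, fun β hβ => ?_⟩
  have : Nonempty (Iio β) := ⟨⟨0, hβ.pos⟩⟩
  exact ciSup_const.symm

theorem sup_const (hC : IsLatticeCongruence C) {x : Ordinal.{u} → L}
    (hx : IsTransfiniteChain C x) (c : L) : IsTransfiniteChain C fun α => x α ⊔ c := by
  obtain ⟨hmono, hstep, hlim⟩ := hx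
  refine ⟨fun α β h => sup_le_sup_right (hmono h) c, fun α => hC.sup_right (hstep α) c,
    fun β hβ => ?_⟩
  have : Nonempty (Iio β) := ⟨⟨0, hβ.pos⟩⟩
  simp only [hlim β hβ, iSup_sup]

theorem inf_const (hC : IsLatticeCongruence C) {x : Ordinal.{u} → L}
    (hx : IsTransfiniteChain C x) (c : L) : IsTransfiniteChain C fun α => x α ⊓ c := by
  obtain ⟨hmono, hstep, hlim⟩ := hx
  refine ⟨fun α β h => inf_le_inf_right c (hmono h), fun α => hC.inf_right (hstep α) c,
    fun β hβ => ?_⟩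
  simp only [hlim β hβ, iSup_inf_eq]

end IsTransfiniteChain

theorem isTransfiniteChain_min (hC : IsLatticeCongruence C) {γ : Ordinal.{u}}
    {x : Ordinal.{u} → L} (hmono : MonotoneOn x (Iic γ)) (hstep : ∀ α < γ, (x α, x (α + 1)) ∈ C)
    (hlim : ∀ β ≤ γ, IsSuccLimit β → x β = ⨆ α : Iio β, x α) :
    IsTransfiniteChain C fun α => x (min α γ) := by
  have hmono' : Monotone fun α => x (min α γ) := fun α β h =>
    hmono (min_le_right α γ) (min_le_right β γ) (min_le_min_right γ h)
  refine ⟨hmono', fun α => ?_, fun β hβ => ?_⟩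
  · dsimp only
    rcases lt_or_ge α γ with h | h
    · rw [min_eq_left h.le, min_eq_left (add_one_le_of_lt h)]
      exact hstep α h
    · rw [min_eq_right h, min_eq_right (h.trans (le_self_add))]
      exact hC.1.refl _
  · refine le_antisymm ?_ (iSup_le fun α => hmono' α.2.le)
    dsimp only
    rcases le_or_gt β γ with h | h
    · rw [min_eq_left h, hlim β h hβ]
      exact iSup_mono fun α => by rw [min_eq_left (α.2.le.trans h)]
    · refine le_trans ?_ (le_iSup (fun α : Iio β => x (min α γ)) ⟨γ, h⟩)
      rw [min_eq_right h.le, min_self]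

def Reaches (C : Set (L × L)) (u v : L) : Prop :=
  ∃ (γ : Ordinal.{u}) (x : Ordinal.{u} → L), IsTransfiniteChain C x ∧ x 0 ≤ u ∧ v ≤ x γ

theorem mem_chainRel_iff (hC : IsLatticeCongruence C) {a b : L} :
    (a, b) ∈ chainRel C ↔ Reaches C (a ⊓ b) (a ⊔ b) := by
  constructor
  · rintro ⟨γ, x, hmono, h0, hγ, hstep, hlim⟩
    refine ⟨γ, fun α => x (min α γ), isTransfiniteChain_min hC hmono hstep hlim, ?_, ?_⟩
    · simpa using h0
    · simpa using hγ
  · rintro ⟨γ, x, ⟨hmono, hstep, hlim⟩, h0, hγ⟩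
    exact ⟨γ, x, hmono.monotoneOn _, h0, hγ, fun α _ => hstep α, fun β _ => hlim β⟩

theorem Reaches.mono {u v u' v' : L} (h : Reaches C u v) (hu : u ≤ u') (hv : v' ≤ v) :
    Reaches C u' v' := by
  obtain ⟨γ, x, hx, h0, hγ⟩ := h
  exact ⟨γ, x, hx, h0.trans hu, hv.trans hγ⟩

theorem reaches_refl (hC : IsLatticeCongruence C) (u : L) : Reaches C u u :=
  ⟨0, fun _ => u, IsTransfiniteChain.const hC u, le_rfl, le_rfl⟩

theorem Reaches.sup_right (hC : IsLatticeCongruence C) {u v : L} (h : Reaches C u v) (c : L) :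
    Reaches C (u ⊔ c) (v ⊔ c) := by
  obtain ⟨γ, x, hx, h0, hγ⟩ := h
  exact ⟨γ, _, hx.sup_const hC c, sup_le_sup_right h0 c, sup_le_sup_right hγ c⟩

theorem Reaches.inf_right (hC : IsLatticeCongruence C) {u v : L} (h : Reaches C u v) (c : L) :
    Reaches C (u ⊓ c) (v ⊓ c) := by
  obtain ⟨γ, x, hx, h0, hγ⟩ := h
  exact ⟨γ, _, hx.inf_const hC c, inf_le_inf_right c h0, inf_le_inf_right c hγ⟩

theorem Reaches.sup_self (hC : IsLatticeCongruence C) {u v : L} (h : Reaches C u v) :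
    Reaches C u (u ⊔ v) :=
  (h.sup_right hC u).mono (by simp) (by rw [sup_comm])

theorem reaches_of_mem_of_le (hC : IsLatticeCongruence C) {a b : L} (h : (a, b) ∈ C)
    (hab : a ≤ b) : Reaches C a b := by
  set x : Ordinal.{u} → L := fun α => if α = 0 then a else b
  have hmono : Monotone x := by
    intro α β hαβ
    by_cases hα : α = 0
    · by_cases hβ : β = 0 <;> simp [x, hα, hβ, hab]
    · simp [x, hα, ((pos_iff_ne_zero.mpr hα).trans_le hαβ).ne']
  refine ⟨1, x, ⟨hmono, fun α => ?_, fun β hβ => ?_⟩, by simp [x], by simp [x]⟩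
  · by_cases hα : α = 0
    · simpa [x, hα] using h
    · simpa [x, hα] using hC.1.refl b
  · refine le_antisymm ?_ (iSup_le fun α => hmono α.2.le)
    have h1 : (1 : Ordinal.{u}) < β := by simpa using hβ.succ_lt hβ.pos
    exact le_trans (by simp [x, hβ.pos.ne']) (le_iSup (fun α : Iio β => x α) ⟨1, h1⟩)

end Chains

section Concatenation

variable {L : Type u} [Order.Frame L] {C : Set (L × L)}

def blockBase (Γ : Ordinal.{u}) (Y : Ordinal.{u} → Ordinal.{u} → L) (c : L)
    (q : Ordinal.{u}) : L :=
  c ⊔ ⨆ q' < q, Y q' Γ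

/-- Block `q` of the concatenation occupies the positions `Γ * q + r`, `r < Γ`. -/
noncomputable def concatChain (Γ : Ordinal.{u}) (Y : Ordinal.{u} → Ordinal.{u} → L) (c : L)
    (α : Ordinal.{u}) : L :=
  Y (α / Γ) (α % Γ) ⊔ blockBase Γ Y c (α / Γ)

variable {Γ : Ordinal.{u}} {Y : Ordinal.{u} → Ordinal.{u} → L} {c : L}

theorem blockBase_mono : Monotone (blockBase Γ Y c) :=
  fun _ _ h => sup_le_sup_left (biSup_mono fun _ hq => hq.trans_le h) c

theorem le_blockBase {q q' : Ordinal.{u}} (h : q < q') : Y q Γ ≤ blockBase Γ Y c q' :=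
  le_sup_of_le_right (le_iSup₂_of_le q h le_rfl)

theorem blockBase_zero : blockBase Γ Y c 0 = c := by
  simp [blockBase]

theorem concatChain_mul_add (hΓ : Γ ≠ 0) (q : Ordinal.{u}) {r : Ordinal.{u}} (hr : r < Γ) :
    concatChain Γ Y c (Γ * q + r) = Y q r ⊔ blockBase Γ Y c q := by
  simp only [concatChain, mul_add_div _ hΓ, div_eq_zero_of_lt hr, add_zero, mul_add_mod_self,
    mod_eq_of_lt hr]

theorem le_concatChain_mul_add (hΓ : Γ ≠ 0) (q : Ordinal.{u}) {r : Ordinal.{u}} (hr : r < Γ) :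
    Y q r ≤ concatChain Γ Y c (Γ * q + r) :=
  (concatChain_mul_add hΓ q hr).ge.trans' le_sup_left

theorem exists_mul_add_eq (hΓ : Γ ≠ 0) (α : Ordinal.{u}) : ∃ q r, r < Γ ∧ Γ * q + r = α :=
  ⟨α / Γ, α % Γ, mod_lt α hΓ, div_add_mod α Γ⟩

theorem blockBase_le_concatChain (hΓ : Γ ≠ 0) (q : Ordinal.{u}) :
    blockBase Γ Y c q ≤ concatChain Γ Y c (Γ * q) := by
  simpa using (concatChain_mul_add (c := c) hΓ q (pos_iff_ne_zero.mpr hΓ)).ge.trans' le_sup_right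

theorem monotone_concatChain (hΓ : Γ ≠ 0) (hY : ∀ q, Monotone (Y q)) :
    Monotone (concatChain Γ Y c) := by
  intro α β h
  rcases (div_le_left h Γ).eq_or_lt with hq | hq
  · have hr : α % Γ ≤ β % Γ := by
      rw [← div_add_mod α Γ, ← div_add_mod β Γ, hq] at h
      exact (add_le_add_iff_left _).mp h
    simp only [concatChain, hq]
    exact sup_le_sup_right (hY _ hr) _
  · calc concatChain Γ Y c α ≤ Y (α / Γ) Γ ⊔ blockBase Γ Y c (α / Γ) :=
          sup_le_sup_right (hY _ (mod_lt α hΓ).le) _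
      _ ≤ blockBase Γ Y c (β / Γ) := sup_le (le_blockBase hq) (blockBase_mono hq.le)
      _ ≤ concatChain Γ Y c β := le_sup_right

theorem concatChain_le_iSup (hΓ : IsSuccLimit Γ) (hY : ∀ q, IsTransfiniteChain C (Y q))
    (hY0 : ∀ q, Y q 0 ≤ blockBase Γ Y c q) {β : Ordinal.{u}} (hβ : IsSuccLimit β) :
    concatChain Γ Y c β ≤ ⨆ α : Iio β, concatChain Γ Y c α := by
  have hΓ0 : Γ ≠ 0 := hΓ.pos.ne'
  have hle : ∀ α < β, concatChain Γ Y c α ≤ ⨆ α : Iio β, concatChain Γ Y c α :=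
    fun α h => le_iSup (fun α : Iio β => concatChain Γ Y c α) ⟨α, h⟩
  obtain ⟨q, r, hr, rfl⟩ := exists_mul_add_eq hΓ0 β
  rw [concatChain_mul_add hΓ0 q hr]
  rcases eq_or_ne r 0 with rfl | hr0
  · rw [add_zero] at hle hβ ⊢
    have hc : c ≤ concatChain Γ Y c 0 := by
      simpa [blockBase_zero] using blockBase_le_concatChain (Y := Y) (c := c) hΓ0 0
    suffices hbase : blockBase Γ Y c q ≤ ⨆ α : Iio (Γ * q), concatChain Γ Y c α from
      sup_le ((hY0 q).trans hbase) hbase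
    refine sup_le (hc.trans (hle 0 hβ.pos)) (iSup₂_le fun q' hq' => ?_)
    rw [(hY q').2.2 Γ hΓ]
    refine iSup_le fun r' => ?_
    have hpos : Γ * q' + r' < Γ * q :=
      calc Γ * q' + r' < Γ * q' + Γ := (add_lt_add_iff_left _).mpr r'.2
        _ = Γ * succ q' := (mul_succ Γ q').symm
        _ ≤ Γ * q := mul_le_mul_right (succ_le_of_lt hq') Γ
    exact (le_concatChain_mul_add hΓ0 q' r'.2).trans (hle _ hpos)
  · have hrl : IsSuccLimit r := (isSuccLimit_add_iff.mp hβ).resolve_right fun h => hr0 h.1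
    refine sup_le ?_ ((blockBase_le_concatChain hΓ0 q).trans
      (hle _ (lt_add_of_pos_right _ (pos_iff_ne_zero.mpr hr0))))
    rw [(hY q).2.2 r hrl]
    exact iSup_le fun r' => (le_concatChain_mul_add hΓ0 q (r'.2.trans hr)).trans
      (hle _ ((add_lt_add_iff_left _).mpr r'.2))

theorem isTransfiniteChain_concatChain (hC : IsLatticeCongruence C) (hΓ : IsSuccLimit Γ)
    (hY : ∀ q, IsTransfiniteChain C (Y q)) (hY0 : ∀ q, Y q 0 ≤ blockBase Γ Y c q) :
    IsTransfiniteChain C (concatChain Γ Y c) := by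
  have hΓ0 : Γ ≠ 0 := hΓ.pos.ne'
  have hmono := monotone_concatChain (c := c) hΓ0 fun q => (hY q).1
  refine ⟨hmono, fun α => ?_, fun β hβ =>
    le_antisymm (concatChain_le_iSup hΓ hY hY0 hβ) (iSup_le fun α => hmono α.2.le)⟩
  obtain ⟨q, r, hr, rfl⟩ := exists_mul_add_eq hΓ0 α
  rw [add_assoc, concatChain_mul_add hΓ0 q hr, concatChain_mul_add hΓ0 q (hΓ.add_one_lt hr)]
  exact hC.sup_right ((hY q).2.1 r) _

theorem reaches_blockBase (hC : IsLatticeCongruence C) (hΓ : IsSuccLimit Γ)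
    (hY : ∀ q, IsTransfiniteChain C (Y q)) (hY0 : ∀ q, Y q 0 ≤ blockBase Γ Y c q)
    (o : Ordinal.{u}) : Reaches C c (blockBase Γ Y c o) := by
  have hΓ0 : Γ ≠ 0 := hΓ.pos.ne'
  refine ⟨Γ * o, concatChain Γ Y c, isTransfiniteChain_concatChain hC hΓ hY hY0, ?_,
    blockBase_le_concatChain hΓ0 o⟩
  have h0 := concatChain_mul_add (Y := Y) (c := c) hΓ0 0 hΓ.pos
  rw [mul_zero, add_zero, blockBase_zero] at h0
  rw [h0]
  exact sup_le (by simpa [blockBase_zero] using hY0 0) le_rfl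

end Concatenation

section Reaches

variable {L : Type u} [Order.Frame L] {C : Set (L × L)}

theorem exists_isSuccLimit_ge {ι : Type u} (γ : ι → Ordinal.{u}) :
    ∃ Γ, IsSuccLimit Γ ∧ ∀ i, γ i ≤ Γ :=
  ⟨(⨆ i, γ i) + ω, isSuccLimit_add _ isSuccLimit_omega0,
    fun i => (Ordinal.le_iSup γ i).trans le_self_add⟩

theorem Reaches.trans (hC : IsLatticeCongruence C) {u v w : L} (h₁ : Reaches C u v)
    (h₂ : Reaches C v w) : Reaches C u w := by
  obtain ⟨γ₁, x, hx, hx0, hxγ⟩ := h₁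
  obtain ⟨γ₂, y, hy, hy0, hyγ⟩ := h₂
  set Γ := max γ₁ γ₂ + ω
  have hΓ : IsSuccLimit Γ := isSuccLimit_add _ isSuccLimit_omega0
  have hγ₁ : γ₁ ≤ Γ := le_max_left γ₁ γ₂ |>.trans le_self_add
  have hγ₂ : γ₂ ≤ Γ := le_max_right γ₁ γ₂ |>.trans le_self_add
  set Y : Ordinal.{u} → Ordinal.{u} → L := fun q => if q = 0 then x else y
  have hY0 : ∀ q, Y q 0 ≤ blockBase Γ Y u q := by
    intro q
    rcases eq_or_ne q 0 with rfl | hq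
    · simpa [Y, blockBase_zero] using hx0
    · calc Y q 0 = y 0 := by simp [Y, hq]
        _ ≤ x Γ := hy0.trans (hxγ.trans (hx.1 hγ₁))
        _ ≤ blockBase Γ Y u q := by
          simpa [Y] using le_blockBase (Y := Y) (c := u) (pos_iff_ne_zero.mpr hq)
  refine (reaches_blockBase hC hΓ (fun q => ?_) hY0 2).mono le_rfl ?_
  · by_cases hq : q = 0 <;> simp [Y, hq, hx, hy]
  · calc w ≤ y Γ := hyγ.trans (hy.1 hγ₂)
      _ ≤ blockBase Γ Y u 2 := by simpa [Y] using le_blockBase (Y := Y) one_lt_two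

theorem reaches_iSup (hC : IsLatticeCongruence C) {ι : Type u} {u : L} {v : ι → L}
    (h : ∀ i, Reaches C u (v i)) : Reaches C u (⨆ i, v i) := by
  rcases isEmpty_or_nonempty ι with _ | _
  · exact (reaches_refl hC u).mono le_rfl (by simp)
  choose γ x hx hx0 hxγ using h
  obtain ⟨Γ, hΓ, hγΓ⟩ := exists_isSuccLimit_ge γ
  let r : ι → ι → Prop := WellOrderingRel
  let idx : Ordinal.{u} → ι := Function.invFun (typein r)
  have hidx : ∀ i, idx (typein r i) = i := Function.leftInverse_invFun (typein_injective r)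
  refine (reaches_blockBase hC hΓ (fun q => hx (idx q)) (fun q => (hx0 _).trans le_sup_left)
    (type r)).mono le_rfl (iSup_le fun i => ?_)
  calc v i ≤ x i Γ := (hxγ i).trans ((hx i).1 (hγΓ i))
    _ = x (idx (typein r i)) Γ := by rw [hidx]
    _ ≤ blockBase Γ (fun q => x (idx q)) u (type r) :=
      le_blockBase (Y := fun q => x (idx q)) (typein_lt_type r i)

end Reaches

section ChainRel

variable {L : Type u} [Order.Frame L] {C : Set (L × L)}

theorem chainRel_refl (hC : IsLatticeCongruence C) (a : L) : (a, a) ∈ chainRel C := by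
  rw [mem_chainRel_iff hC, inf_idem, sup_idem]
  exact reaches_refl hC a

theorem chainRel_symm {a b : L} (h : (a, b) ∈ chainRel C) : (b, a) ∈ chainRel C := by
  obtain ⟨γ, x, hx⟩ := h
  exact ⟨γ, x, by simpa only [inf_comm, sup_comm] using hx⟩

theorem chainRel_trans (hC : IsLatticeCongruence C) {a b c : L} (hab : (a, b) ∈ chainRel C)
    (hbc : (b, c) ∈ chainRel C) : (a, c) ∈ chainRel C := by
  rw [mem_chainRel_iff hC] at hab hbc ⊢
  have hlow : Reaches C (a ⊓ b ⊓ c) (a ⊓ b) :=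
    (hbc.inf_right hC (a ⊓ b)).mono (by simp [inf_left_comm, inf_comm]) (by simp)
  have hhigh : Reaches C (a ⊔ b) (a ⊔ b ⊔ c) :=
    (hbc.sup_right hC (a ⊔ b)).mono (sup_le (inf_le_left.trans le_sup_right) le_rfl)
      (sup_le le_sup_right (le_sup_of_le_left le_sup_right))
  exact ((hlow.trans hC hab).trans hC hhigh).mono
    (le_inf (inf_le_left.trans inf_le_left) inf_le_right)
    (sup_le (le_sup_of_le_left le_sup_left) le_sup_right)

theorem chainRel_inf (hC : IsLatticeCongruence C) {a b c d : L} (hab : (a, b) ∈ chainRel C)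
    (hcd : (c, d) ∈ chainRel C) : (a ⊓ c, b ⊓ d) ∈ chainRel C := by
  have hac : (a ⊓ c, b ⊓ c) ∈ chainRel C := by
    rw [mem_chainRel_iff hC] at hab ⊢
    exact (hab.inf_right hC c).mono (by simp [inf_inf_distrib_right]) (by simp [inf_sup_right])
  have hbd : (c ⊓ b, d ⊓ b) ∈ chainRel C := by
    rw [mem_chainRel_iff hC] at hcd ⊢
    exact (hcd.inf_right hC b).mono (by simp [inf_inf_distrib_right]) (by simp [inf_sup_right])
  rw [inf_comm c, inf_comm d] at hbd
  exact chainRel_trans hC hac hbd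

theorem chainRel_iSup_sup (hC : IsLatticeCongruence C) {ι : Type u} {a b : ι → L}
    (h : ∀ i, (a i, b i) ∈ chainRel C) : (⨆ i, a i, (⨆ i, a i) ⊔ ⨆ i, b i) ∈ chainRel C := by
  rw [mem_chainRel_iff hC, inf_sup_self, ← sup_assoc, sup_idem]
  refine (reaches_iSup hC fun i => ?_).sup_self hC
  exact (((mem_chainRel_iff hC).mp (h i)).sup_right hC (⨆ i, a i)).mono
    (sup_le (inf_le_left.trans (le_iSup a i)) le_rfl) (le_sup_right.trans le_sup_left)

theorem chainRel_iSup (hC : IsLatticeCongruence C) {ι : Type u} {a b : ι → L}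
    (h : ∀ i, (a i, b i) ∈ chainRel C) : (⨆ i, a i, ⨆ i, b i) ∈ chainRel C := by
  have ha := chainRel_iSup_sup hC h
  have hb := chainRel_iSup_sup hC fun i => chainRel_symm (h i)
  rw [sup_comm] at hb
  exact chainRel_trans hC ha (chainRel_symm hb)

theorem subset_chainRel (hC : IsLatticeCongruence C) : C ⊆ chainRel C := by
  rintro ⟨a, b⟩ h
  rw [mem_chainRel_iff hC]
  exact reaches_of_mem_of_le hC (hC.inf_sup_mem h) inf_le_sup

end ChainRel

/-- For a lattice congruence `C`, the relation `C̃` is a frame congruence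
containing `C`. -/
theorem chainRel_isFrameCongruence {L : Type u} [Order.Frame L]
    (C : Set (L × L)) (hC : IsLatticeCongruence C) :
    IsFrameCongruence (chainRel C) ∧ C ⊆ chainRel C := by
  refine ⟨⟨⟨chainRel_refl hC, chainRel_symm, chainRel_trans hC⟩,
    fun p q hp hq => chainRel_inf hC hp hq, fun S hS => ?_⟩, subset_chainRel hC⟩
  rw [sSup_image', sSup_image']
  exact chainRel_iSup hC fun p => hS p.2
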